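/- Let H be a real vector space with two pairs of seminorms satisfying the assumptions (A2) and (A3) of the paper. Then there exists a constant 0 < c₀ < 1 such that for every γ > 0 and every f ∈ H: ‖f‖₁ᴵ² + (1/γ)·‖f‖₂ᴵ² ≤ (1+γ)·(‖f‖₁ᴵᴵ² + (1/(c₀γ))·‖f‖₂ᴵᴵ²). -/

import Mathlib

lemma cs_aux {H : Type*} [AddCommGroup H] [Module ℝ H] (B : H →ₗ[ℝ] H →ₗ[ℝ] ℝ)
    (hs : ∀ f g, B f g = B g f) (hp : ∀ f, 0 ≤ B f f) (f g : H) :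
    (B f g)^2 ≤ B f f * B g g := by
  have h : ∀ t : ℝ, 0 ≤ B g g * (t*t) + (2 * B f g) * t + B f f := by
    intro t
    have h0 := hp (f + t • g)
    simp only [map_add, map_smul, LinearMap.add_apply, LinearMap.smul_apply,
      smul_eq_mul] at h0
    rw [hs g f] at h0
    nlinarith [h0]
  have hd := discrim_le_zero h
  rw [discrim] at hd
  nlinarith [hd]


lemma arith_aux (X Y cc γ : ℝ) (hγ : 0 < γ) :
    γ*(X + cc*Y)^2 + cc^2*Y^2 ≤ (1+γ)*γ*X^2 + (1+γ)*(2*cc^2*Y^2) := by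
  nlinarith [sq_nonneg (γ*X - cc*Y), sq_nonneg Y, mul_nonneg hγ.le (sq_nonneg (cc*Y)),
    sq_nonneg (cc*Y)]

lemma tri_aux (a b bff g1 : ℝ) (hg1 : 0 ≤ g1) (hb2 : b^2 ≤ g1^2)
    (heq : bff = a*a + 2*a*b + g1^2) : bff ≤ (|a| + g1)^2 := by
  have hb : |b| ≤ g1 := by
    nlinarith [sq_abs b, abs_nonneg b]
  nlinarith [le_abs_self (a*b), abs_mul a b, sq_abs a,
    mul_le_mul_of_nonneg_left hb (abs_nonneg a)]

set_option maxHeartbeats 1000000 in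
/-- Theorem 1 (lem1) of the paper: for two pairs of seminorms satisfying (A2) and (A3)
there is a constant `0 < c₀ < 1` such that for every `γ > 0` and every `f ∈ H`,
`‖f‖₁ᴵ² + (1/γ)‖f‖₂ᴵ² ≤ (1+γ)(‖f‖₁ᴵᴵ² + (1/(c₀γ))‖f‖₂ᴵᴵ²)`. -/
theorem stmt_2 {H : Type*} [AddCommGroup H] [Module ℝ H]
    (B1I B2I B1II B2II : H →ₗ[ℝ] H →ₗ[ℝ] ℝ)
    (hB1Isymm : ∀ f g, B1I f g = B1I g f) (hB2Isymm : ∀ f g, B2I f g = B2I g f)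
    (hB1IIsymm : ∀ f g, B1II f g = B1II g f) (hB2IIsymm : ∀ f g, B2II f g = B2II g f)
    (hB1Ipos : ∀ f, 0 ≤ B1I f f) (hB2Ipos : ∀ f, 0 ≤ B2I f f)
    (hB1IIpos : ∀ f, 0 ≤ B1II f f) (hB2IIpos : ∀ f, 0 ≤ B2II f f)
    (n1I n2I n1II n2II : H → ℝ)
    (hn1I : ∀ f, n1I f = Real.sqrt (B1I f f)) (hn2I : ∀ f, n2I f = Real.sqrt (B2I f f))
    (hn1II : ∀ f, n1II f = Real.sqrt (B1II f f)) (hn2II : ∀ f, n2II f = Real.sqrt (B2II f f))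
    (one : H)
    (hone1I : n1I one = 1) (hone2I : n2I one = 0)
    (hone1II : n1II one = 1) (hone2II : n2II one = 0)
    (c : ℝ) (hc : 1 ≤ c)
    -- equivalence of the two Hilbert space norms (closed graph theorem consequence)
    (hequivI : ∀ f, Real.sqrt (n1I f ^ 2 + n2I f ^ 2) ≤ c * Real.sqrt (n1II f ^ 2 + n2II f ^ 2))
    (hequivII : ∀ f, Real.sqrt (n1II f ^ 2 + n2II f ^ 2) ≤ c * Real.sqrt (n1I f ^ 2 + n2I f ^ 2))
    -- assumption (A3), inequality (eq2), for both pairs of seminorms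
    (heq2I : ∀ f, Real.sqrt (n1I f ^ 2 + n2I f ^ 2) ≤ c * (|B1I f one| + n2I f))
    (heq2II : ∀ f, Real.sqrt (n1II f ^ 2 + n2II f ^ 2) ≤ c * (|B1II f one| + n2II f)) :
    ∃ c₀ : ℝ, 0 < c₀ ∧ c₀ < 1 ∧ ∀ γ : ℝ, 0 < γ → ∀ f : H,
      n1I f ^ 2 + (1 / γ) * n2I f ^ 2 ≤
        (1 + γ) * (n1II f ^ 2 + (1 / (c₀ * γ)) * n2II f ^ 2) := by
  have hc0 : (0:ℝ) < c := lt_of_lt_of_le one_pos hc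
  have hc2 : (1:ℝ) ≤ c^2 := by nlinarith
  have hc4 : (1:ℝ) ≤ c^4 := by nlinarith
  have hc4pos : (0:ℝ) < c^4 := by positivity
  refine ⟨1/(2*c^4), by positivity, ?_, ?_⟩
  · rw [div_lt_one (by positivity)]; linarith
  intro γ hγ f
  -- basic values on `one`
  have hB1I11 : B1I one one = 1 := by
    have := hn1I one; rw [hone1I] at this
    nlinarith [Real.sq_sqrt (hB1Ipos one), this]
  have hB1II11 : B1II one one = 1 := by
    have := hn1II one; rw [hone1II] at this
    nlinarith [Real.sq_sqrt (hB1IIpos one), this]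
  have hB2I11 : B2I one one = 0 := by
    have := hn2I one; rw [hone2I] at this
    nlinarith [Real.sq_sqrt (hB2Ipos one), this]
  have hB2II11 : B2II one one = 0 := by
    have := hn2II one; rw [hone2II] at this
    nlinarith [Real.sq_sqrt (hB2IIpos one), this]
  -- `one` is B2-orthogonal to everything
  have hB2If1 : ∀ x, B2I x one = 0 := by
    intro x
    have h := cs_aux B2I hB2Isymm hB2Ipos x one
    rw [hB2I11, mul_zero] at h
    nlinarith [sq_nonneg (B2I x one)]
  have hB2IIf1 : ∀ x, B2II x one = 0 := by
    intro x
    have h := cs_aux B2II hB2IIsymm hB2IIpos x one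
    rw [hB2II11, mul_zero] at h
    nlinarith [sq_nonneg (B2II x one)]
  set a : ℝ := B1II f one with ha
  set g : H := f - a • one with hgdef
  -- B2 values of g equal those of f
  have hexp : ∀ (B : H →ₗ[ℝ] H →ₗ[ℝ] ℝ),
      B g g = B f f - a * B f one - a * B one f + a * a * B one one := by
    intro B
    simp only [hgdef, map_sub, map_smul, LinearMap.sub_apply, LinearMap.smul_apply,
      smul_eq_mul]
    ring
  have hg2I : B2I g g = B2I f f := by
    rw [hexp B2I, hB2If1 f, hB2Isymm one f, hB2If1 f, hB2I11]; ring
  have hg2II : B2II g g = B2II f f := by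
    rw [hexp B2II, hB2IIf1 f, hB2IIsymm one f, hB2IIf1 f, hB2II11]; ring
  have hn2Ig : n2I g = n2I f := by rw [hn2I, hn2I, hg2I]
  have hn2IIg : n2II g = n2II f := by rw [hn2II, hn2II, hg2II]
  have hg1II_one : B1II g one = 0 := by
    simp only [hgdef, map_sub, map_smul, LinearMap.sub_apply, LinearMap.smul_apply,
      smul_eq_mul]
    rw [hB1II11, ← ha]; ring
  -- nonnegativity
  have hn1If : 0 ≤ n1I f := by rw [hn1I]; exact Real.sqrt_nonneg _
  have hn2If : 0 ≤ n2I f := by rw [hn2I]; exact Real.sqrt_nonneg _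
  have hn1IIf : 0 ≤ n1II f := by rw [hn1II]; exact Real.sqrt_nonneg _
  have hn2IIf : 0 ≤ n2II f := by rw [hn2II]; exact Real.sqrt_nonneg _
  have hn1Ig : 0 ≤ n1I g := by rw [hn1I]; exact Real.sqrt_nonneg _
  have hn2Ig0 : 0 ≤ n2I g := by rw [hn2I]; exact Real.sqrt_nonneg _
  -- key chain : sqrt(n1I g ^2 + n2I g^2) ≤ c^2 * n2II f
  have hchain : Real.sqrt (n1I g ^ 2 + n2I g ^ 2) ≤ c^2 * n2II f := by
    have h1 := hequivI g
    have h2 := heq2II g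
    rw [hg1II_one] at h2
    simp only [abs_zero, zero_add] at h2
    calc Real.sqrt (n1I g ^ 2 + n2I g ^ 2) ≤ c * Real.sqrt (n1II g ^ 2 + n2II g ^ 2) := h1
      _ ≤ c * (c * n2II g) := mul_le_mul_of_nonneg_left h2 hc0.le
      _ = c^2 * n2II f := by rw [hn2IIg]; ring
  have hsqle : ∀ x y : ℝ, 0 ≤ x → x ≤ Real.sqrt (x^2 + y^2) := by
    intro x y hx
    have h := Real.sqrt_le_sqrt (show x^2 ≤ x^2 + y^2 by nlinarith [sq_nonneg y])
    rwa [Real.sqrt_sq hx] at h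
  have hn2I_le : n2I f ≤ c^2 * n2II f := by
    calc n2I f = n2I g := hn2Ig.symm
      _ ≤ Real.sqrt (n2I g ^ 2 + n1I g ^ 2) := hsqle _ _ hn2Ig0
      _ = Real.sqrt (n1I g ^ 2 + n2I g ^ 2) := by rw [add_comm]
      _ ≤ c^2 * n2II f := hchain
  have hn1Ig_le : n1I g ≤ c^2 * n2II f :=
    (hsqle _ _ hn1Ig).trans hchain
  -- |a| ≤ n1II f
  have ha_le : |a| ≤ n1II f := by
    have h := cs_aux B1II hB1IIsymm hB1IIpos f one
    rw [hB1II11, mul_one] at h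
    rw [hn1II]
    have h2 := Real.sqrt_le_sqrt h
    rwa [Real.sqrt_sq_eq_abs] at h2
  -- n1I f ≤ n1II f + c^2 n2II f
  have hn1I_le : n1I f ≤ n1II f + c^2 * n2II f := by
    have hf : f = a • one + g := by rw [hgdef]; abel
    have hexp2 : B1I f f = a*a + 2*a*(B1I one g) + B1I g g := by
      conv_lhs => rw [hf]
      simp only [map_add, map_smul, LinearMap.add_apply, LinearMap.smul_apply, smul_eq_mul]
      rw [hB1I11, hB1Isymm g one]
      ring
    have hcs := cs_aux B1I hB1Isymm hB1Ipos one g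
    rw [hB1I11, one_mul] at hcs
    have hsq : B1I g g = n1I g ^ 2 := by
      rw [hn1I, Real.sq_sqrt (hB1Ipos g)]
    have hb : B1I f f ≤ (|a| + n1I g)^2 := by
      exact tri_aux a (B1I one g) (B1I f f) (n1I g) hn1Ig (by rw [hsq] at hcs; exact hcs)
        (by rw [hexp2, hsq])
    have h3 : n1I f ≤ |a| + n1I g := by
      rw [hn1I]
      have h4 := Real.sqrt_le_sqrt hb
      rwa [Real.sqrt_sq (by positivity)] at h4
    linarith
  -- final arithmetic
  have hγ' : γ ≠ 0 := ne_of_gt hγ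
  set X := n1II f
  set Y := n2II f
  have h1 : n1I f ^ 2 ≤ (X + c^2 * Y)^2 := pow_le_pow_left₀ hn1If hn1I_le 2
  have h2 : n2I f ^ 2 ≤ (c^2 * Y)^2 := pow_le_pow_left₀ hn2If hn2I_le 2
  have hkey : (X + c^2 * Y)^2 + (1/γ) * (c^2 * Y)^2 ≤
      (1 + γ) * (X ^ 2 + (1 / (1/(2*c^4) * γ)) * Y ^ 2) := by
    have e2 : 1 / (1/(2*c^4) * γ) = 2*c^4/γ := by field_simp
    rw [e2, ← mul_le_mul_iff_right₀ hγ]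
    have eL : γ * ((X + c^2*Y)^2 + (1/γ)*(c^2*Y)^2) = γ*(X+c^2*Y)^2 + (c^2)^2*Y^2 := by
      field_simp
    have eR : γ * ((1+γ) * (X^2 + 2*c^4/γ * Y^2)) = (1+γ)*γ*X^2 + (1+γ)*(2*(c^2)^2*Y^2) := by
      field_simp
    rw [eL, eR]
    exact arith_aux X Y (c^2) γ hγ
  have hmono : (1/γ) * n2I f ^ 2 ≤ (1/γ) * (c^2 * Y)^2 :=
    mul_le_mul_of_nonneg_left h2 (by positivity)
  linarith
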